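/- arXiv:1305.6298 — 4 statements merged into one kernel-verified Lean document; each statement's English description precedes it below -/
import Mathlib

section
/- Let R be a commutative ring with a derivation δ, let g ∈ R, and let ε ≥ 1 and j ≥ 0 be integers. Then δ^{jε}(g^ε) = ((jε)!/(j!)^ε)·(δ^j g)^ε + Σ_{l=0}^{j−1} p_l · δ^l g for some elements p_l ∈ R. That is, the (jε)-th derivative of g^ε equals the multinomial coefficient (jε)!/(j!)^ε times (δ^j g)^ε plus an element of the ideal generated by g, δg, …, δ^{j−1}g. -/
/-!
Work modulo the ideal `I` generated by `g, δg, …, δ^{j-1}g`. Expanding `δ^n(g · g^ε)` by the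
general Leibniz rule, every term `δ^k g · δ^{n-k}(g^ε)` with `k < j` lies in `I`. By induction on
`ε` this shows that `δ^m(g^ε) ∈ I` for `m < jε`, and that for `n = j(ε+1)` only the term with
`k = j` survives modulo `I`; the binomial coefficient `(jε+j choose j)` it carries is exactly the
factor by which the multinomial coefficient `(jε)!/(j!)^ε` grows from `ε` to `ε+1`.
-/

open Finset

theorem Nat.multinomial_univ_fin_succ_const (ε j : ℕ) :
    Nat.multinomial (univ : Finset (Fin (ε + 1))) (fun _ => j) =
      (j + j * ε).choose j * Nat.multinomial (univ : Finset (Fin ε)) (fun _ => j) := by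
  rw [Fin.univ_succ, Nat.multinomial_cons]
  simp [Nat.multinomial, mul_comm]

namespace Derivation

section CommSemiring
variable {A R : Type*} [CommSemiring A] [CommSemiring R] [Algebra A R] (D : Derivation A R R)

theorem iterate_apply_mul (n : ℕ) (a b : R) :
    D^[n] (a * b) = ∑ ij ∈ antidiagonal n, n.choose ij.1 • (D^[ij.1] a * D^[ij.2] b) := by
  induction n with
  | zero => simp
  | succ n ih =>
    rw [sum_antidiagonal_choose_succ_nsmul (M := R) (fun i j => D^[i] a * D^[j] b) n]
    simp only [Function.iterate_succ_apply', ih, map_sum, map_nsmul, leibniz, smul_eq_mul,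
      smul_add, sum_add_distrib]
    congr 1
    refine sum_congr rfl fun ij hij => ?_
    rw [n.choose_symm_of_eq_add (HasAntidiagonal.mem_antidiagonal.1 hij).symm, mul_comm]

def iterateIdeal (g : R) (j : ℕ) : Ideal R :=
  Ideal.span (Set.range fun l : Fin j => D^[l] g)

theorem iterate_mem_iterateIdeal {g : R} {j l : ℕ} (hl : l < j) :
    D^[l] g ∈ D.iterateIdeal g j :=
  Ideal.subset_span ⟨⟨l, hl⟩, rfl⟩

theorem iterate_pow_mem_iterateIdeal (g : R) (j : ℕ) :
    ∀ {ε m : ℕ}, m < j * ε → D^[m] (g ^ ε) ∈ D.iterateIdeal g j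
  | 0, m, hm => by omega
  | ε + 1, m, hm => by
    rw [pow_succ', iterate_apply_mul]
    refine sum_mem fun ⟨k, l⟩ hkl => Submodule.smul_of_tower_mem _ _ ?_
    rw [HasAntidiagonal.mem_antidiagonal] at hkl
    dsimp only
    by_cases hk : k < j
    · exact Ideal.mul_mem_right _ _ (D.iterate_mem_iterateIdeal hk)
    · refine Ideal.mul_mem_left _ _ (iterate_pow_mem_iterateIdeal g j ?_)
      rw [Nat.mul_succ] at hm
      omega

end CommSemiring

variable {A R : Type*} [CommSemiring A] [CommRing R] [Algebra A R] (D : Derivation A R R)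

theorem mk_iterate_pow (g : R) (j ε : ℕ) :
    Ideal.Quotient.mk (D.iterateIdeal g j) (D^[j * ε] (g ^ ε)) =
      Nat.multinomial (univ : Finset (Fin ε)) (fun _ => j) *
        Ideal.Quotient.mk (D.iterateIdeal g j) (D^[j] g) ^ ε := by
  induction ε with
  | zero => simp
  | succ ε ih =>
    have hmain : (j, j * ε) ∈ antidiagonal (j + j * ε) := HasAntidiagonal.mem_antidiagonal.2 rfl
    rw [Nat.mul_succ, add_comm, pow_succ', iterate_apply_mul, map_sum,
      sum_eq_single_of_mem _ hmain fun ⟨k, l⟩ hkl hne => ?_]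
    · rw [map_nsmul, map_mul, ih, nsmul_eq_mul, Nat.multinomial_univ_fin_succ_const]
      push_cast
      ring
    · rw [HasAntidiagonal.mem_antidiagonal] at hkl
      rw [map_nsmul, map_mul]
      rcases lt_trichotomy k j with hk | rfl | hk
      · rw [Ideal.Quotient.eq_zero_iff_mem.2 (D.iterate_mem_iterateIdeal hk), zero_mul, smul_zero]
      · exact (hne (Prod.ext rfl (by dsimp only; omega))).elim
      · rw [Ideal.Quotient.eq_zero_iff_mem.2 (D.iterate_pow_mem_iterateIdeal g j (by omega)),
          mul_zero, smul_zero]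

end Derivation

theorem stmt_5_general (R : Type*) [CommRing R] [Algebra ℚ R]
    (δ : Derivation ℚ R R) (g : R) (ε j : ℕ) :
    ∃ p : ℕ → R,
      (⇑δ)^[j * ε] (g ^ ε) =
        (Nat.multinomial (Finset.univ : Finset (Fin ε)) (fun _ => j) : R)
            * ((⇑δ)^[j] g) ^ ε
          + ∑ l ∈ Finset.range j, p l * (⇑δ)^[l] g := by
  have hmem : δ^[j * ε] (g ^ ε) - Nat.multinomial (univ : Finset (Fin ε)) (fun _ => j) *
      (δ^[j] g) ^ ε ∈ δ.iterateIdeal g j := by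
    rw [← Ideal.Quotient.eq, map_mul, map_pow, map_natCast]
    exact δ.mk_iterate_pow g j ε
  obtain ⟨c, hc⟩ := Ideal.mem_span_range_iff_exists_fun.1 hmem
  refine ⟨fun l => if h : l < j then c ⟨l, h⟩ else 0, ?_⟩
  rw [← Fin.sum_univ_eq_sum_range (fun l => (if h : l < j then c ⟨l, h⟩ else 0) * δ^[l] g)]
  simp only [Fin.is_lt, dif_pos, Fin.eta, hc]
  ring

/-- for a derivation `δ` on a commutative ℚ-algebra `R`, `g ∈ R`,
`ε ≥ 1`, `j ≥ 0`:
`δ^[jε](g^ε) = ((jε)!/(j!)^ε)·(δ^[j] g)^ε + Σ_{l<j} p_l · δ^[l] g`,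
where `(jε)!/(j!)^ε` is the multinomial coefficient. -/
theorem stmt_5 (R : Type*) [CommRing R] [Algebra ℚ R]
    (δ : Derivation ℚ R R) (g : R) (ε j : ℕ) (hε : 1 ≤ ε) :
    ∃ p : ℕ → R,
      (⇑δ)^[j * ε] (g ^ ε) =
        (Nat.multinomial (Finset.univ : Finset (Fin ε)) (fun _ => j) : R)
            * ((⇑δ)^[j] g) ^ ε
          + ∑ l ∈ Finset.range j, p l * (⇑δ)^[l] g :=
  stmt_5_general R δ g ε j
end

section
/- Let x = x₁,…,x_n and u = u₁,…,u_m be differential variables over ℂ, and let f = f₁,…,f_n and g = g₁,…,g_s be polynomials in ℂ[x,u] such that the ideal (g) ⊆ ℂ[x,u] is radical and zero-dimensional. Then 1 belongs to the differential ideal [ẋ − f, g] ⊆ ℂ{x,u} if and only if 1 belongs to the algebraic ideal (ẋ − f, g, ġ) ⊆ ℂ[x, u, ẋ, u̇], where ġ denotes the first total derivatives of the polynomials g. -/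
open MvPolynomial

/-- The differential polynomial ring `ℂ{σ}` modelled as `MvPolynomial (σ × ℕ) ℂ`,
`X (v, i)` standing for the `i`-th derivative of the variable `v`, with the
canonical derivation `X (v, i) ↦ X (v, i+1)`. -/
noncomputable def diffDer (σ : Type*) :
    Derivation ℂ (MvPolynomial (σ × ℕ) ℂ) (MvPolynomial (σ × ℕ) ℂ) :=
  MvPolynomial.mkDerivation ℂ (fun p => MvPolynomial.X (p.1, p.2 + 1))

/-- The differential ideal generated by `S`: the ideal generated by the
elements of `S` together with all their derivatives. -/
def diffIdeal {R : Type*} [CommRing R] (δ : R → R) (S : Set R) : Ideal R :=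
  Ideal.span {r : R | ∃ s ∈ S, ∃ k : ℕ, r = δ^[k] s}

/-!
If `1 ∉ (ẋ − f, g, ġ)`, the Nullstellensatz, applied in the finitely many variables of order
at most `1`, gives a point `(a, b)` with `g(a) = 0`, `∇g(a) · b = 0` and `b_x = f(a)`. The map
`h ↦ ∇h(a) · b` is a point derivation at `a` vanishing on `(g)`. As `(g)` is radical with finitely
many zeros, it contains `(X_v − a_v) · e` for an interpolating polynomial `e` that is `1` at `a`
and `0` at the other zeros, and the point derivation sends this element to `b_v`. So `b = 0`,
hence `f(a) = 0`, and the constant trajectory at `a` is a zero of all of `[ẋ − f, g]`.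
-/

namespace MvPolynomial

variable {K σ : Type*} [Field K]

theorem exists_eval_eq_one_and_eval_eq_zero {F : Set (σ → K)} (hF : F.Finite) (a : σ → K) :
    ∃ e : MvPolynomial σ K, eval a e = 1 ∧ ∀ c ∈ F, c ≠ a → eval c e = 0 := by
  classical
  have hsep : ∀ c ≠ a, ∃ q : MvPolynomial σ K, eval c q = 0 ∧ eval a q = 1 := by
    intro c hca
    obtain ⟨v, hv⟩ := Function.ne_iff.1 hca
    refine ⟨C (a v - c v)⁻¹ * (X v - C (c v)), by simp, ?_⟩
    simp [inv_mul_cancel₀ (sub_ne_zero.2 hv.symm)]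
  choose! q hqc hqa using hsep
  refine ⟨∏ c ∈ hF.toFinset.erase a, q c, ?_, fun c hc hca => ?_⟩
  · rw [map_prod]
    exact Finset.prod_eq_one fun c hc => hqa c (Finset.ne_of_mem_erase hc)
  · rw [map_prod]
    exact Finset.prod_eq_zero (by simp [hc, hca]) (hqc c hca)

def IsPointDerivation (a : σ → K) (D : MvPolynomial σ K →ₗ[K] K) : Prop :=
  ∀ p q, D (p * q) = eval a p * D q + eval a q * D p

namespace IsPointDerivation

variable {a : σ → K} {D : MvPolynomial σ K →ₗ[K] K}

theorem map_C (hD : IsPointDerivation a D) (c : K) : D (C c) = 0 := by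
  have h1 : D 1 = 0 := by simpa using hD 1 1
  rw [← mul_one (C c), C_mul', map_smul, h1, smul_zero]

theorem map_eq_zero_of_mem_span (hD : IsPointDerivation a D) {S : Set (MvPolynomial σ K)}
    (haS : ∀ p ∈ S, eval a p = 0) (hDS : ∀ p ∈ S, D p = 0) {p : MvPolynomial σ K}
    (hp : p ∈ Ideal.span S) : D p = 0 := by
  have hker : Ideal.span S ≤ RingHom.ker (eval a) := Ideal.span_le.2 haS
  induction hp using Submodule.span_induction with
  | mem p hp => exact hDS p hp
  | zero => exact map_zero D
  | add p q _ _ hp hq => rw [map_add, hp, hq, add_zero]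
  | smul r p hpS hp => rw [smul_eq_mul, hD, hp, RingHom.mem_ker.1 (hker hpS), mul_zero, zero_mul,
      add_zero]

variable [IsAlgClosed K] [Finite σ]

theorem map_X_eq_zero {I : Ideal (MvPolynomial σ K)} (hD : IsPointDerivation a D)
    (hrad : I.IsRadical) (hfin : (zeroLocus K I).Finite)
    (hDI : ∀ p ∈ I, D p = 0) (v : σ) : D (X v) = 0 := by
  obtain ⟨e, hea, he⟩ := exists_eval_eq_one_and_eval_eq_zero hfin a
  have hmem : (X v - C (a v)) * e ∈ I := by
    rw [← hrad.radical, ← vanishingIdeal_zeroLocus_eq_radical (K := K)]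
    intro c hc
    by_cases hca : c = a
    · simp [hca]
    · simp [he c hc hca]
  simpa [hD _ e, hea, hD.map_C] using hDI _ hmem

end IsPointDerivation

theorem eval_congr_of_mem_supported {R : Type*} [CommSemiring R] {V : Set σ}
    {p : MvPolynomial σ R} (hp : p ∈ supported R V) {x y : σ → R} (hxy : ∀ i ∈ V, x i = y i) :
    eval x p = eval y p :=
  eval₂Hom_congr' rfl (fun i hi _ => hxy i (mem_supported.1 hp hi)) rfl

theorem rename_mem_supported {R τ : Type*} [CommSemiring R] (f : σ → τ)
    (p : MvPolynomial σ R) : rename f p ∈ supported R (Set.range f) := by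
  rw [supported_eq_adjoin_X, ← Set.range_comp, Algebra.adjoin_range_eq_range_aeval,
    rename_eq_aeval]
  exact ⟨p, rfl⟩

theorem zeroLocus_nonempty_of_ne_top [IsAlgClosed K] [Finite σ]
    {I : Ideal (MvPolynomial σ K)} (hI : I ≠ ⊤) : (zeroLocus K I).Nonempty := by
  rw [Set.nonempty_iff_ne_empty]
  intro h
  have := vanishingIdeal_zeroLocus_eq_radical (K := K) I
  rw [h, vanishingIdeal_empty, eq_comm, Ideal.radical_eq_top] at this
  exact hI this

theorem exists_forall_eval_eq_zero_of_subset_supported [IsAlgClosed K] {V : Set σ}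
    (hV : V.Finite) {S : Set (MvPolynomial σ K)} (hS : S ⊆ supported K V)
    (h1 : (1 : MvPolynomial σ K) ∉ Ideal.span S) : ∃ z : σ → K, ∀ p ∈ S, eval z p = 0 := by
  have : Finite V := hV.to_subtype
  set ι : V → σ := (↑)
  have hS' : rename ι '' (rename ι ⁻¹' S) = S := by
    rw [Set.image_preimage_eq_iff]
    simpa [supported_eq_range_rename] using hS
  obtain ⟨z, hz⟩ : (zeroLocus K (Ideal.span (rename ι ⁻¹' S))).Nonempty := by
    refine zeroLocus_nonempty_of_ne_top fun htop => h1 ?_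
    rw [← hS', ← Ideal.map_span, htop, Ideal.map_top]
    exact Submodule.mem_top
  refine ⟨Function.extend ι z 0, ?_⟩
  rw [← hS']
  rintro _ ⟨p, hp, rfl⟩
  rw [eval_rename, Function.extend_comp Subtype.val_injective]
  exact (mem_zeroLocus_iff.1 hz) p (Ideal.subset_span hp)

end MvPolynomial

theorem span_union_image_le_diffIdeal {R : Type*} [CommRing R] (δ : R → R) {S T : Set R}
    (hT : T ⊆ S) : Ideal.span (S ∪ δ '' T) ≤ diffIdeal δ S := by
  refine Ideal.span_mono ?_
  rintro _ (hr | ⟨t, ht, rfl⟩)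
  · exact ⟨_, hr, 0, rfl⟩
  · exact ⟨t, hT ht, 1, rfl⟩

section diffDer

variable {σ : Type*}

theorem finite_setOf_snd_le [Finite σ] (k : ℕ) : {w : σ × ℕ | w.2 ≤ k}.Finite :=
  (Set.finite_univ.prod (Set.finite_Iic k)).subset fun _ hw => ⟨trivial, hw⟩

theorem rename_order_zero_mem_supported (k : ℕ) (p : MvPolynomial σ ℂ) :
    rename (fun v => (v, 0)) p ∈ supported ℂ {w : σ × ℕ | w.2 ≤ k} :=
  supported_mono (by rintro _ ⟨v, rfl⟩; exact Nat.zero_le k) (rename_mem_supported _ p)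

theorem diffDer_X (w : σ × ℕ) : diffDer σ (X w) = X (w.1, w.2 + 1) :=
  mkDerivation_X _ _ _

theorem diffDer_mem_supported {k : ℕ} {p : MvPolynomial (σ × ℕ) ℂ}
    (hp : p ∈ supported ℂ {w : σ × ℕ | w.2 ≤ k}) :
    diffDer σ p ∈ supported ℂ {w : σ × ℕ | w.2 ≤ k + 1} := by
  have hmono : supported ℂ {w : σ × ℕ | w.2 ≤ k} ≤ supported ℂ {w | w.2 ≤ k + 1} :=
    supported_mono fun w hw => Nat.le_succ_of_le hw
  induction hp using Algebra.adjoin_induction with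
  | mem p hp =>
    obtain ⟨w, hw, rfl⟩ := hp
    rw [diffDer_X]
    exact X_mem_supported.2 (Nat.succ_le_succ hw)
  | algebraMap c => rw [Derivation.map_algebraMap]; exact zero_mem _
  | add p q _ _ hp hq => rw [map_add]; exact add_mem hp hq
  | mul p q hpk hqk hp hq =>
    rw [Derivation.leibniz, smul_eq_mul, smul_eq_mul]
    exact add_mem (mul_mem (hmono hpk) hq) (mul_mem (hmono hqk) hp)

theorem eval_diffDer_eq_zero {Q : σ × ℕ → ℂ} (hQ : ∀ v k, Q (v, k + 1) = 0)
    (p : MvPolynomial (σ × ℕ) ℂ) : eval Q (diffDer σ p) = 0 := by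
  induction p using MvPolynomial.induction_on with
  | C c => rw [← MvPolynomial.algebraMap_eq, Derivation.map_algebraMap, map_zero]
  | add p q hp hq => rw [map_add, map_add, hp, hq, add_zero]
  | mul_X p w hp =>
    rw [Derivation.leibniz, diffDer_X, map_add, smul_eq_mul, smul_eq_mul, map_mul, map_mul, hp,
      eval_X, hQ, mul_zero, mul_zero, add_zero]

theorem diffIdeal_le_ker_eval {Q : σ × ℕ → ℂ} (hQ : ∀ v k, Q (v, k + 1) = 0)
    {S : Set (MvPolynomial (σ × ℕ) ℂ)} (hS : ∀ p ∈ S, eval Q p = 0) :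
    diffIdeal (diffDer σ) S ≤ RingHom.ker (eval Q) := by
  rw [diffIdeal, Ideal.span_le]
  rintro _ ⟨p, hp, _ | k, rfl⟩
  · exact hS _ hp
  · rw [SetLike.mem_coe, RingHom.mem_ker, Function.iterate_succ_apply']
    exact eval_diffDer_eq_zero hQ _

/-- A zero of `S` with vanishing first derivatives extends to a constant trajectory. -/
theorem one_notMem_diffIdeal {S : Set (MvPolynomial (σ × ℕ) ℂ)}
    (hS : S ⊆ supported ℂ {w : σ × ℕ | w.2 ≤ 1}) {Q : σ × ℕ → ℂ} (hQS : ∀ p ∈ S, eval Q p = 0)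
    (hQ : ∀ v, Q (v, 1) = 0) : (1 : MvPolynomial (σ × ℕ) ℂ) ∉ diffIdeal (diffDer σ) S := by
  set P : σ × ℕ → ℂ := fun w => if w.2 = 0 then Q w else 0
  have hPQ : ∀ w ∈ {w : σ × ℕ | w.2 ≤ 1}, P w = Q w := by
    rintro ⟨v, _ | _ | k⟩ hw
    · rfl
    · exact (hQ v).symm
    · exact absurd hw (by simp)
  intro h
  simpa using diffIdeal_le_ker_eval (Q := P) (fun v k => if_neg k.succ_ne_zero)
    (fun p hp => (eval_congr_of_mem_supported (hS hp) hPQ).trans (hQS p hp)) h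

-- `p ↦ (δ p)(Q)` is the derivative of `p` at `Q (·, 0)` in the direction `Q (·, 1)`.
theorem isPointDerivation_eval_diffDer_rename (Q : σ × ℕ → ℂ) :
    IsPointDerivation (fun v => Q (v, 0))
      ((aeval Q).toLinearMap ∘ₗ (diffDer σ).toLinearMap ∘ₗ
        (rename fun v => (v, 0)).toLinearMap) := by
  intro p q
  simp [Derivation.leibniz, eval_rename, Function.comp_def]

theorem tangent_eq_zero_of_isRadical [Finite σ] {S : Set (MvPolynomial σ ℂ)}
    (hrad : (Ideal.span S).IsRadical) (hfin : (zeroLocus ℂ (Ideal.span S)).Finite)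
    {Q : σ × ℕ → ℂ} (hS : ∀ p ∈ S, eval Q (rename (fun v => (v, 0)) p) = 0 ∧
      eval Q (diffDer σ (rename (fun v => (v, 0)) p)) = 0) (v : σ) : Q (v, 1) = 0 := by
  have hD := isPointDerivation_eval_diffDer_rename Q
  have hXv : eval Q (diffDer σ (rename (fun v => (v, 0)) (X v))) = Q (v, 1) := by
    rw [rename_X, diffDer_X, eval_X]
  rw [← hXv]
  refine hD.map_X_eq_zero hrad hfin (fun p hp => hD.map_eq_zero_of_mem_span (fun p hp => ?_)
    (fun p hp => (hS p hp).2) hp) v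
  simpa [eval_rename, Function.comp_def] using (hS p hp).1

end diffDer

/-- for a semiexplicit system `ẋ = f(x,u)`, `g(x,u) = 0` whose
algebraic constraint ideal `(g)` is radical and zero-dimensional (finite zero
set), `1` lies in the differential ideal `[ẋ − f, g]` iff `1` lies in the
algebraic ideal `(ẋ − f, g, ġ)`. -/
theorem stmt_7 (n m s : ℕ)
    (f : Fin n → MvPolynomial (Fin n ⊕ Fin m) ℂ)
    (g : Fin s → MvPolynomial (Fin n ⊕ Fin m) ℂ)
    (hrad : (Ideal.span (Set.range g)).IsRadical)
    (hdim0 : (zeroLocus ℂ (Ideal.span (Set.range g))).Finite) :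
    letI δ := diffDer (Fin n ⊕ Fin m)
    letI emb : MvPolynomial (Fin n ⊕ Fin m) ℂ →
        MvPolynomial ((Fin n ⊕ Fin m) × ℕ) ℂ :=
      fun p => aeval (fun v => X (v, 0)) p
    letI Sx : Set (MvPolynomial ((Fin n ⊕ Fin m) × ℕ) ℂ) :=
      Set.range (fun i : Fin n => X (Sum.inl i, 1) - emb (f i))
    letI Sg : Set (MvPolynomial ((Fin n ⊕ Fin m) × ℕ) ℂ) :=
      Set.range (fun j : Fin s => emb (g j))
    ((1 : MvPolynomial ((Fin n ⊕ Fin m) × ℕ) ℂ) ∈ diffIdeal (⇑δ) (Sx ∪ Sg) ↔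
      (1 : MvPolynomial ((Fin n ⊕ Fin m) × ℕ) ℂ) ∈
        Ideal.span (Sx ∪ Sg ∪ (⇑δ '' Sg))) := by
  have hemb : (aeval fun v => X (v, 0) : MvPolynomial (Fin n ⊕ Fin m) ℂ →ₐ[ℂ] _) =
      rename fun v => (v, 0) := by
    rw [rename_eq_aeval]; rfl
  simp only [hemb]
  refine ⟨fun h1 => ?_, fun h1 => span_union_image_le_diffIdeal _ Set.subset_union_right h1⟩
  contrapose! h1
  set Sx := Set.range fun i => X (Sum.inl i, 1) - rename (fun v => (v, 0)) (f i)
  set Sg := Set.range fun j => rename (R := ℂ) (fun v => ((v, 0) : _ × ℕ)) (g j)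
  have hsupp : Sx ∪ Sg ∪ diffDer _ '' Sg ⊆
      (supported ℂ {w : (Fin n ⊕ Fin m) × ℕ | w.2 ≤ 1} : Set _) := by
    rintro _ ((⟨i, rfl⟩ | ⟨j, rfl⟩) | ⟨_, ⟨j, rfl⟩, rfl⟩)
    · exact sub_mem (X_mem_supported.2 (le_refl 1)) (rename_order_zero_mem_supported 1 _)
    · exact rename_order_zero_mem_supported 1 _
    · exact diffDer_mem_supported (rename_order_zero_mem_supported 0 _)
  obtain ⟨Q, hQ⟩ := exists_forall_eval_eq_zero_of_subset_supported (finite_setOf_snd_le 1) hsupp h1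
  have hb : ∀ v, Q (v, 1) = 0 := tangent_eq_zero_of_isRadical hrad hdim0 <| by
    rintro _ ⟨j, rfl⟩
    exact ⟨hQ _ (Or.inl (Or.inr ⟨j, rfl⟩)), hQ _ (Or.inr ⟨_, ⟨j, rfl⟩, rfl⟩)⟩
  exact one_notMem_diffIdeal (Set.subset_union_left.trans hsupp)
    (fun p hp => hQ p (Or.inl hp)) hb
end

section
/- Let x = x₁,…,x_n be differential variables and f = f₁,…,f_s differential polynomials in ℂ[x, ẋ, …, x^{(e)}] with e ≥ 1. Introduce new variables z_{i,j} for 1 ≤ i ≤ n, 0 ≤ j ≤ e, and set z_j = (z_{1,j},…,z_{n,j}) and f̄_k = f_k(z₀,…,z_e). Then 1 ∈ [f] in ℂ{x} if and only if 1 ∈ [ż₀ − z₁, …, ż_{e−1} − z_e, f̄] in ℂ{z₀,…,z_e}. -/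
open MvPolynomial

/-!
The homomorphism `φ : ℂ{z} → ℂ{x}`, `z_{i,j}^{(k)} ↦ x_i^{(j+k)}`, commutes with the derivations,
kills the relations `ż_j − z_{j+1}` and sends `f̄` to `f`, so it maps `[ż − z, f̄]` into `[f]`.
Conversely, let `ψ : ℂ{x} → ℂ{z}`, `x_i^{(m)} ↦ z_{i,0}^{(m)}`. Modulo the differential ideal of
the relations, `z_{i,j}^{(k)} ≡ z_{i,0}^{(j+k)}`, so `ψ ∘ φ` is congruent to the identity; hence
`ψ (f^{(k)}) = ψ (φ (f̄^{(k)})) ≡ f̄^{(k)}` and `ψ` maps `[f]` into `[ż − z, f̄]`. Both maps send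
`1` to `1`.
-/

section DiffIdeal

variable {R R' : Type*} [CommRing R] [CommRing R']

lemma iterate_mem_diffIdeal {δ : R → R} {S : Set R} {s : R} (hs : s ∈ S) (k : ℕ) :
    δ^[k] s ∈ diffIdeal δ S :=
  Ideal.subset_span ⟨s, hs, k, rfl⟩

lemma diffIdeal_le_iff {δ : R → R} {S : Set R} {J : Ideal R} :
    diffIdeal δ S ≤ J ↔ ∀ s ∈ S, ∀ k : ℕ, δ^[k] s ∈ J := by
  rw [diffIdeal, Ideal.span_le]
  constructor
  · exact fun h s hs k => h ⟨s, hs, k, rfl⟩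
  · rintro h _ ⟨s, hs, k, rfl⟩
    exact h s hs k

lemma diffIdeal_mono {δ : R → R} {S T : Set R} (h : S ⊆ T) : diffIdeal δ S ≤ diffIdeal δ T :=
  diffIdeal_le_iff.mpr fun _ hs k => iterate_mem_diffIdeal (h hs) k

lemma map_diffIdeal {F : Type*} [FunLike F R R'] [RingHomClass F R R'] {φ : F}
    {δ : R → R} {δ' : R' → R'} (h : Function.Semiconj φ δ δ') (S : Set R) :
    Ideal.map φ (diffIdeal δ S) = diffIdeal δ' (φ '' S) := by
  rw [diffIdeal, diffIdeal, Ideal.map_span]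
  congr 1
  ext r
  constructor
  · rintro ⟨_, ⟨s, hs, k, rfl⟩, rfl⟩
    exact ⟨φ s, ⟨s, hs, rfl⟩, k, h.iterate_right k s⟩
  · rintro ⟨_, ⟨s, hs, rfl⟩, k, rfl⟩
    exact ⟨_, ⟨s, hs, k, rfl⟩, h.iterate_right k s⟩

lemma one_mem_of_map_le {F : Type*} [FunLike F R R'] [RingHomClass F R R'] {φ : F}
    {I : Ideal R} {J : Ideal R'} (hle : I.map φ ≤ J) (h : (1 : R) ∈ I) : (1 : R') ∈ J := by
  simpa using hle (Ideal.mem_map_of_mem φ h)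

end DiffIdeal

lemma MvPolynomial.semiconj_derivation_of_X {R σ A : Type*} [CommRing R] [CommRing A]
    [Algebra R A] (φ : MvPolynomial σ R →ₐ[R] A)
    (D : Derivation R (MvPolynomial σ R) (MvPolynomial σ R)) (D' : Derivation R A A)
    (h : ∀ v, φ (D (X v)) = D' (φ (X v))) :
    Function.Semiconj φ D D' := by
  intro p
  induction p using MvPolynomial.induction_on with
  | C a => simp only [← algebraMap_eq, AlgHom.commutes, Derivation.map_algebraMap, map_zero]
  | add p q hp hq => simp only [map_add, hp, hq]
  | mul_X p v hp => simp only [Derivation.leibniz, smul_eq_mul, map_add, map_mul, hp, h]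

lemma MvPolynomial.sub_mem_of_X_sub_mem {R σ A : Type*} [CommRing R] [CommRing A] [Algebra R A]
    {φ ψ : MvPolynomial σ R →ₐ[R] A} {I : Ideal A} (h : ∀ v, φ (X v) - ψ (X v) ∈ I)
    (p : MvPolynomial σ R) : φ p - ψ p ∈ I := by
  have : (Ideal.Quotient.mkₐ R I).comp φ = (Ideal.Quotient.mkₐ R I).comp ψ :=
    algHom_ext fun v => Ideal.Quotient.eq.mpr (h v)
  exact Ideal.Quotient.eq.mp (AlgHom.congr_fun this p)

lemma diffDer_X_s15 {σ : Type*} (v : σ) (m : ℕ) : diffDer σ (X (v, m)) = X (v, m + 1) :=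
  mkDerivation_X ℂ _ (v, m)

lemma iterate_diffDer_X {σ : Type*} (v : σ) (m k : ℕ) :
    (diffDer σ)^[k] (X (v, m)) = X (v, m + k) := by
  induction k with
  | zero => rfl
  | succ k ih => rw [Function.iterate_succ_apply', ih, diffDer_X_s15, Nat.add_assoc]

section OrderReduction

variable {σ : Type*} (e : ℕ)

noncomputable def collapse :
    MvPolynomial ((σ × Fin (e + 1)) × ℕ) ℂ →ₐ[ℂ] MvPolynomial (σ × ℕ) ℂ :=
  aeval fun q => X (q.1.1, (q.1.2 : ℕ) + q.2)

noncomputable def embedZero :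
    MvPolynomial (σ × ℕ) ℂ →ₐ[ℂ] MvPolynomial ((σ × Fin (e + 1)) × ℕ) ℂ :=
  aeval fun p => X ((p.1, 0), p.2)

def shiftRelations : Set (MvPolynomial ((σ × Fin (e + 1)) × ℕ) ℂ) :=
  Set.range fun q : σ × Fin e => X ((q.1, q.2.castSucc), 1) - X ((q.1, q.2.succ), 0)

@[simp]
lemma collapse_X (v : σ) (j : Fin (e + 1)) (k : ℕ) :
    collapse e (X ((v, j), k)) = X (v, (j : ℕ) + k) :=
  aeval_X _ _

@[simp]
lemma embedZero_X (v : σ) (m : ℕ) : embedZero e (X (v, m)) = X ((v, 0), m) :=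
  aeval_X _ _

lemma semiconj_collapse :
    Function.Semiconj (collapse (σ := σ) e) (diffDer _) (diffDer σ) :=
  semiconj_derivation_of_X _ _ _ fun ⟨⟨v, j⟩, k⟩ => by
    simp only [diffDer_X_s15, collapse_X, Nat.add_assoc]

lemma collapse_aeval (P : MvPolynomial (σ × Fin (e + 1)) ℂ) :
    collapse e (aeval (fun p => X (p, 0)) P) = aeval (fun p => X (p.1, (p.2 : ℕ))) P := by
  rw [collapse, comp_aeval_apply]
  simp

lemma collapse_eq_zero_of_mem_shiftRelations {r : MvPolynomial ((σ × Fin (e + 1)) × ℕ) ℂ}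
    (hr : r ∈ shiftRelations e) : collapse e r = 0 := by
  obtain ⟨⟨v, j⟩, rfl⟩ := hr
  simp

lemma X_sub_X_zero_mem_diffIdeal_shiftRelations (v : σ) (j : Fin (e + 1)) (k : ℕ) :
    X ((v, j), k) - X ((v, 0), (j : ℕ) + k) ∈ diffIdeal (diffDer _) (shiftRelations e) := by
  induction j using Fin.induction generalizing k with
  | zero => simp
  | succ j ih =>
    have hrel : X ((v, j.castSucc), k + 1) - X ((v, j.succ), k) ∈
        diffIdeal (diffDer _) (shiftRelations e) := by
      have := iterate_mem_diffIdeal (δ := diffDer (σ × Fin (e + 1)))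
        (show X ((v, j.castSucc), 1) - X ((v, j.succ), 0) ∈ shiftRelations e from ⟨(v, j), rfl⟩) k
      rwa [iterate_map_sub, iterate_diffDer_X, iterate_diffDer_X, Nat.add_comm 1 k,
        Nat.zero_add] at this
    -- `z_{j+1}^{(k)} ≡ z_j^{(k+1)} ≡ z_0^{(j+k+1)}`
    convert Ideal.sub_mem _ (ih (k + 1)) hrel using 1
    simp only [Fin.val_castSucc, Fin.val_succ, Nat.add_right_comm, Nat.add_assoc]
    ring

lemma sub_embedZero_collapse_mem (p : MvPolynomial ((σ × Fin (e + 1)) × ℕ) ℂ) :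
    p - embedZero e (collapse e p) ∈ diffIdeal (diffDer _) (shiftRelations e) :=
  sub_mem_of_X_sub_mem (φ := AlgHom.id ℂ _) (ψ := (embedZero e).comp (collapse e))
    (fun ⟨⟨v, j⟩, k⟩ => by simpa using X_sub_X_zero_mem_diffIdeal_shiftRelations e v j k) p

lemma embedZero_collapse_mem_of_mem {J : Ideal (MvPolynomial ((σ × Fin (e + 1)) × ℕ) ℂ)}
    (hJ : diffIdeal (diffDer _) (shiftRelations e) ≤ J)
    {p : MvPolynomial ((σ × Fin (e + 1)) × ℕ) ℂ} (hp : p ∈ J) : embedZero e (collapse e p) ∈ J := by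
  rw [← sub_sub_cancel p (embedZero e (collapse e p))]
  exact J.sub_mem hp (hJ (sub_embedZero_collapse_mem e p))

variable {ι : Type*} (F : ι → MvPolynomial (σ × Fin (e + 1)) ℂ)

lemma map_collapse_diffIdeal_le :
    (diffIdeal (diffDer _)
        (shiftRelations e ∪ Set.range fun k => aeval (fun p => X (p, 0)) (F k))).map
      (collapse e) ≤
      diffIdeal (diffDer σ) (Set.range fun k => aeval (fun p => X (p.1, (p.2 : ℕ))) (F k)) := by
  rw [map_diffIdeal (semiconj_collapse e), diffIdeal_le_iff]
  rintro _ ⟨r, hr | ⟨k, rfl⟩, rfl⟩ j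
  · rw [collapse_eq_zero_of_mem_shiftRelations e hr, iterate_map_zero]
    exact Ideal.zero_mem _
  · rw [collapse_aeval]
    exact iterate_mem_diffIdeal (Set.mem_range_self k) j

lemma map_embedZero_diffIdeal_le :
    (diffIdeal (diffDer σ) (Set.range fun k => aeval (fun p => X (p.1, (p.2 : ℕ))) (F k))).map
      (embedZero e) ≤
      diffIdeal (diffDer _)
        (shiftRelations e ∪ Set.range fun k => aeval (fun p => X (p, 0)) (F k)) := by
  rw [Ideal.map_le_iff_le_comap, diffIdeal_le_iff]
  rintro _ ⟨k, rfl⟩ j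
  beta_reduce
  rw [Ideal.mem_comap, ← collapse_aeval, ← (semiconj_collapse e).iterate_right]
  exact embedZero_collapse_mem_of_mem e (diffIdeal_mono Set.subset_union_left)
    (iterate_mem_diffIdeal (Set.mem_union_right _ (Set.mem_range_self k)) j)

end OrderReduction

theorem stmt_15_general (n s e : ℕ)
    (F : Fin s → MvPolynomial (Fin n × Fin (e + 1)) ℂ) :
    letI δ₁ := diffDer (Fin n)
    letI f : Fin s → MvPolynomial (Fin n × ℕ) ℂ :=
      fun k => aeval (fun p : Fin n × Fin (e + 1) => X (p.1, (p.2 : ℕ))) (F k)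
    letI δ₂ := diffDer (Fin n × Fin (e + 1))
    letI fbar : Fin s → MvPolynomial ((Fin n × Fin (e + 1)) × ℕ) ℂ :=
      fun k => aeval (fun p : Fin n × Fin (e + 1) => X (p, 0)) (F k)
    letI Sz : Set (MvPolynomial ((Fin n × Fin (e + 1)) × ℕ) ℂ) :=
      Set.range (fun q : Fin n × Fin e =>
        X ((q.1, Fin.castSucc q.2), 1) - X ((q.1, Fin.succ q.2), 0))
    ((1 : MvPolynomial (Fin n × ℕ) ℂ) ∈ diffIdeal (⇑δ₁) (Set.range f) ↔
      (1 : MvPolynomial ((Fin n × Fin (e + 1)) × ℕ) ℂ) ∈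
        diffIdeal (⇑δ₂) (Sz ∪ Set.range fbar)) :=
  ⟨one_mem_of_map_le (map_embedZero_diffIdeal_le e F),
    one_mem_of_map_le (map_collapse_diffIdeal_le e F)⟩

/-- order reduction: let `F₁,…,F_s` be polynomials in the
variables `x_i^{(j)}`, `0 ≤ j ≤ e` (i.e. differential polynomials of order
`≤ e` in `ℂ{x₁,…,x_n}`), and let `z_{i,j}` be new differential variables.
Then `1 ∈ [F]` in `ℂ{x}` iff
`1 ∈ [ż₀ − z₁, …, ż_{e−1} − z_e, F̄]` in `ℂ{z₀,…,z_e}`,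
where `F̄_k = F_k(z₀,…,z_e)`. -/
theorem stmt_15 (n s e : ℕ) (he : 1 ≤ e)
    (F : Fin s → MvPolynomial (Fin n × Fin (e + 1)) ℂ) :
    letI δ₁ := diffDer (Fin n)
    letI f : Fin s → MvPolynomial (Fin n × ℕ) ℂ :=
      fun k => aeval (fun p : Fin n × Fin (e + 1) => X (p.1, (p.2 : ℕ))) (F k)
    letI δ₂ := diffDer (Fin n × Fin (e + 1))
    letI fbar : Fin s → MvPolynomial ((Fin n × Fin (e + 1)) × ℕ) ℂ :=
      fun k => aeval (fun p : Fin n × Fin (e + 1) => X (p, 0)) (F k)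
    letI Sz : Set (MvPolynomial ((Fin n × Fin (e + 1)) × ℕ) ℂ) :=
      Set.range (fun q : Fin n × Fin e =>
        X ((q.1, Fin.castSucc q.2), 1) - X ((q.1, Fin.succ q.2), 0))
    ((1 : MvPolynomial (Fin n × ℕ) ℂ) ∈ diffIdeal (⇑δ₁) (Set.range f) ↔
      (1 : MvPolynomial ((Fin n × Fin (e + 1)) × ℕ) ℂ) ∈
        diffIdeal (⇑δ₂) (Sz ∪ Set.range fbar)) :=
  stmt_15_general n s e F
end

section
/- In the differential polynomial ring ℂ{x₁, u₁,…,u_m}, consider the system ẋ₁ = 1 together with the constraints g: u_m − x₁², u_{m−1} − u_m², …, u₁ − u₂², u₁². Then the element 1 belongs to the differential ideal [ẋ₁ − 1, g], but 1 does NOT belong to the algebraic ideal generated by (ẋ₁ − 1)^{[L]} and g^{[L]} for any L < 2^{m+1}. -/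
/-!
Modulo the differential ideal, `u_k ≡ x₁ ^ 2 ^ (m + 1 - k)`, so `u₁² = 0` gives
`x₁ ^ 2 ^ (m + 1) ≡ 0`; differentiating `x₁ ^ (n + 1)` and using `ẋ₁ ≡ 1` lowers the exponent
by one, down to `1`.
Conversely, `x₁ = t`, `u_k = t ^ 2 ^ (m + 1 - k)` solves every generator except
`u₁² = t ^ 2 ^ (m + 1)`, whose derivatives of order `< 2 ^ (m + 1)` all vanish at `t = 0`.
So substituting this solution and then `t = 0` is a ring homomorphism to `ℂ` that kills every
derivative of order `≤ L < 2 ^ (m + 1)` of every generator, but not `1`.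
-/

open MvPolynomial

section DifferentialIdeal

variable {R A : Type*} [CommSemiring R] [CommRing A] [Algebra R A]

theorem subset_diffIdeal (δ : A → A) (S : Set A) : S ⊆ diffIdeal δ S :=
  fun s hs => Ideal.subset_span ⟨s, hs, 0, rfl⟩

theorem apply_mem_diffIdeal (d : Derivation R A A) (S : Set A) {r : A}
    (hr : r ∈ diffIdeal d S) : d r ∈ diffIdeal d S := by
  induction hr using Submodule.span_induction with
  | mem x hx =>
    obtain ⟨s, hs, k, rfl⟩ := hx
    exact Ideal.subset_span ⟨s, hs, k + 1, (Function.iterate_succ_apply' _ _ _).symm⟩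
  | zero => simp
  | add a b _ _ ha hb => simpa using add_mem ha hb
  | smul a b hb hdb =>
    rw [smul_eq_mul, Derivation.leibniz, smul_eq_mul, smul_eq_mul]
    exact add_mem (Ideal.mul_mem_left _ _ hdb) (Ideal.mul_mem_right _ _ hb)

theorem one_mem_of_pow_mem [Algebra ℚ A] (d : Derivation R A A) {I : Ideal A}
    (hI : ∀ r ∈ I, d r ∈ I) {x : A} (hx : d x - 1 ∈ I) {n : ℕ} (hxn : x ^ n ∈ I) :
    (1 : A) ∈ I := by
  induction n with
  | zero => simpa using hxn
  | succ n ih =>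
    apply ih
    have hd := hI _ hxn
    rw [Derivation.leibniz_pow, Nat.add_sub_cancel, smul_eq_mul, ← Nat.cast_smul_eq_nsmul ℚ] at hd
    have key : ((n + 1 : ℕ) : ℚ) • x ^ n =
        ((n + 1 : ℕ) : ℚ) • (x ^ n * d x) - (((n + 1 : ℕ) : ℚ) • x ^ n) * (d x - 1) := by
      rw [smul_mul_assoc, ← smul_sub, mul_sub, mul_one, sub_sub_cancel]
    rw [← I.smul_mem_iff (s := ((n + 1 : ℕ) : ℚ)) (Nat.cast_ne_zero.mpr n.succ_ne_zero), key]
    exact sub_mem hd (I.mul_mem_left _ hx)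

end DifferentialIdeal

theorem pow_two_pow_mem_of_sub_sq_mem {A : Type*} [CommRing A] {I : Ideal A} (v : ℕ → A)
    {n : ℕ} (hv : ∀ i < n, v i - v (i + 1) ^ 2 ∈ I) (h0 : v 0 ^ 2 ∈ I) :
    v n ^ 2 ^ (n + 1) ∈ I := by
  induction n with
  | zero => simpa using h0
  | succ n ih =>
    have hn : v n ^ 2 ^ (n + 1) ∈ I := ih fun i hi => hv i (by omega)
    have hdvd := sub_dvd_pow_sub_pow (v n) (v (n + 1) ^ 2) (2 ^ (n + 1))
    rw [← pow_mul, ← pow_succ'] at hdvd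
    have hdiff := I.mem_of_dvd hdvd (hv n n.lt_succ_self)
    simpa using sub_mem hn hdiff

section Jets

open Polynomial

variable {σ : Type*}

noncomputable def jetEval (f : σ → ℂ[X]) : MvPolynomial (σ × ℕ) ℂ →ₐ[ℂ] ℂ[X] :=
  aeval fun p => derivative^[p.2] (f p.1)

theorem jetEval_X (f : σ → ℂ[X]) (p : σ × ℕ) :
    jetEval f (MvPolynomial.X p) = derivative^[p.2] (f p.1) :=
  aeval_X _ _

theorem jetEval_diffDer (f : σ → ℂ[X]) (r : MvPolynomial (σ × ℕ) ℂ) :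
    jetEval f (diffDer σ r) = derivative (jetEval f r) := by
  induction r using MvPolynomial.induction_on with
  | C a => simp [MvPolynomial.derivation_C]
  | add p q hp hq => simp [hp, hq]
  | mul_X p v hp =>
    have hX : diffDer σ (MvPolynomial.X v) = MvPolynomial.X (v.1, v.2 + 1) := mkDerivation_X _ _ _
    simp only [Derivation.leibniz, smul_eq_mul, map_add, map_mul, derivative_mul, hp, hX,
      jetEval_X, Function.iterate_succ_apply']
    ring

theorem jetEval_iterate_diffDer (f : σ → ℂ[X]) (j : ℕ) (r : MvPolynomial (σ × ℕ) ℂ) :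
    jetEval f ((diffDer σ)^[j] r) = derivative^[j] (jetEval f r) := by
  induction j generalizing r with
  | zero => rfl
  | succ j ih => simp only [Function.iterate_succ_apply, ih, jetEval_diffDer]

theorem one_notMem_span_iterate_diffDer (f : σ → ℂ[X]) (S : Set (MvPolynomial (σ × ℕ) ℂ))
    (L : ℕ) (hS : ∀ s ∈ S, ∀ j ≤ L, (derivative^[j] (jetEval f s)).eval 0 = 0) :
    (1 : MvPolynomial (σ × ℕ) ℂ) ∉
      Ideal.span {r | ∃ s ∈ S, ∃ j ≤ L, r = (diffDer σ)^[j] s} := by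
  let ψ := (evalRingHom (0 : ℂ)).comp (jetEval f).toRingHom
  have hle : Ideal.span {r | ∃ s ∈ S, ∃ j ≤ L, r = (diffDer σ)^[j] s} ≤ RingHom.ker ψ := by
    rw [Ideal.span_le]
    rintro r ⟨s, hs, j, hj, rfl⟩
    simpa [ψ, jetEval_iterate_diffDer] using hS s hs j hj
  exact fun h => one_ne_zero (α := ℂ) (by simpa [ψ] using hle h)

theorem eval_zero_iterate_derivative_X_pow {R : Type*} [CommSemiring R] {j n : ℕ} (h : j < n) :
    (derivative^[j] (Polynomial.X ^ n : R[X])).eval 0 = 0 := by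
  simp [iterate_derivative_X_pow_eq_C_mul, zero_pow (Nat.sub_ne_zero_of_lt h)]

end Jets

section Golubitzky

variable (m : ℕ) (hm : 0 < m)

/-- `Sum.inl ()` is `x₁`, `Sum.inr k` is `u_{k+1}`. -/
def golubitzkySystem : Set (MvPolynomial ((Unit ⊕ Fin m) × ℕ) ℂ) :=
  {X (Sum.inl (), 1) - 1} ∪
      {X (Sum.inr ⟨m - 1, Nat.sub_lt hm Nat.one_pos⟩, 0) - X (Sum.inl (), 0) ^ 2} ∪
    {r | ∃ k : ℕ, ∃ h : k + 1 < m,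
      r = X (Sum.inr ⟨k, Nat.lt_of_succ_lt h⟩, 0) - X (Sum.inr ⟨k + 1, h⟩, 0) ^ 2} ∪
    {X (Sum.inr ⟨0, hm⟩, 0) ^ 2}

theorem one_mem_diffIdeal_golubitzkySystem :
    (1 : MvPolynomial ((Unit ⊕ Fin m) × ℕ) ℂ) ∈
      diffIdeal (diffDer (Unit ⊕ Fin m)) (golubitzkySystem m hm) := by
  set I := diffIdeal (diffDer (Unit ⊕ Fin m)) (golubitzkySystem m hm)
  have hS : golubitzkySystem m hm ⊆ I := subset_diffIdeal _ _
  let v : ℕ → MvPolynomial ((Unit ⊕ Fin m) × ℕ) ℂ :=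
    fun i => if h : i < m then X (Sum.inr ⟨i, h⟩, 0) else X (Sum.inl (), 0)
  have hchain : ∀ i < m, v i - v (i + 1) ^ 2 ∈ I := by
    intro i hi
    apply hS
    by_cases hlast : i + 1 < m
    · exact Or.inl (Or.inr ⟨i, hlast, by simp [v, hi, hlast]⟩)
    · obtain rfl : i = m - 1 := by omega
      exact Or.inl (Or.inl (Or.inr (by simp [v, hi, hlast])))
  have hpow := pow_two_pow_mem_of_sub_sq_mem v hchain (hS (by simp [golubitzkySystem, v, hm]))
  simp only [v, lt_irrefl, dite_false] at hpow
  refine one_mem_of_pow_mem (diffDer _) (fun r => apply_mem_diffIdeal _ _) ?_ hpow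
  exact hS (Or.inl (Or.inl (Or.inl (by simp [diffDer, mkDerivation_X]))))

noncomputable def golubitzkySolution : Unit ⊕ Fin m → Polynomial ℂ :=
  Sum.elim (fun _ => Polynomial.X) (fun k => Polynomial.X ^ 2 ^ (m - k))

theorem jetEval_golubitzkySolution {s : MvPolynomial ((Unit ⊕ Fin m) × ℕ) ℂ}
    (hs : s ∈ golubitzkySystem m hm) :
    jetEval (golubitzkySolution m) s = 0 ∨
      jetEval (golubitzkySolution m) s = Polynomial.X ^ 2 ^ (m + 1) := by
  rcases hs with ((rfl | rfl) | ⟨k, hk, rfl⟩) | rfl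
  · simp [jetEval_X, golubitzkySolution]
  · left
    simp [jetEval_X, golubitzkySolution, Nat.sub_sub_self hm]
  · left
    simp only [map_sub, map_pow, jetEval_X, golubitzkySolution, Function.iterate_zero, id_eq,
      Sum.elim_inr, ← pow_mul, ← pow_succ]
    rw [show m - (k + 1) + 1 = m - k by omega, sub_self]
  · right
    simp [jetEval_X, golubitzkySolution, ← pow_mul, ← pow_succ]

end Golubitzky

/-- the Golubitzky et al. example: in `ℂ{x₁, u₁, …, u_m}`, for
the system `ẋ₁ = 1`, `u_m − x₁² = 0`, `u_j − u_{j+1}² = 0` (`1 ≤ j ≤ m−1`),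
`u₁² = 0`: the element `1` lies in the differential ideal
`[ẋ₁ − 1, g]`, but not in the algebraic ideal generated by the derivatives of
the generators up to any order `L < 2^{m+1}`. -/
theorem stmt_18 (m : ℕ) (hm : 0 < m) :
    letI σ := Unit ⊕ Fin m
    letI δ := diffDer σ
    letI x : MvPolynomial (σ × ℕ) ℂ := X (Sum.inl (), 0)
    letI u : Fin m → MvPolynomial (σ × ℕ) ℂ := fun k => X (Sum.inr k, 0)
    letI S : Set (MvPolynomial (σ × ℕ) ℂ) :=
      {X (Sum.inl (), 1) - 1} ∪ {u ⟨m - 1, Nat.sub_lt hm Nat.one_pos⟩ - x ^ 2} ∪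
        {r | ∃ k : ℕ, ∃ h : k + 1 < m,
          r = u ⟨k, Nat.lt_of_succ_lt h⟩ - (u ⟨k + 1, h⟩) ^ 2} ∪
        {(u ⟨0, hm⟩) ^ 2}
    ((1 : MvPolynomial (σ × ℕ) ℂ) ∈ diffIdeal (⇑δ) S ∧
      ∀ L : ℕ, L < 2 ^ (m + 1) →
        (1 : MvPolynomial (σ × ℕ) ℂ) ∉
          Ideal.span {r | ∃ s ∈ S, ∃ j ≤ L, r = (⇑δ)^[j] s}) := by
  refine ⟨one_mem_diffIdeal_golubitzkySystem m hm, fun L hL => ?_⟩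
  refine one_notMem_span_iterate_diffDer (golubitzkySolution m) (golubitzkySystem m hm) L
    fun s hs j hj => ?_
  rcases jetEval_golubitzkySolution m hm hs with h | h
  · simp [h]
  · rw [h]
    exact eval_zero_iterate_derivative_X_pow (R := ℂ) (by omega)
end
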